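/- Let S be the standard unilateral shift on ℓ²(ℕ), i.e. the weighted unilateral shift with all weights equal to 1 (S e_k = e_{k+1} for all k). Then for every k ∈ ℕ, ⟨e_0, (S + S*)^{2k} e_0⟩ = C_k, the k-th Catalan number. -/

import Mathlib

/-!
`T = S + S*` acts on coordinates by `(T x) 0 = x 1` and `(T x) (i + 1) = x i + x (i + 2)`, so the
`i`-th coordinate of `T ^ n e₀` counts the `±1` lattice paths of length `n` from height `0` to
height `i` that never go below `0`. By André's reflection principle there are
`C(2d + j, d) - C(2d + j, d + j + 1)` such paths of length `2d + j` ending at height `j`; for the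
closed paths of length `2k` this is `C(2k, k) - C(2k, k + 1) = C_k`.
-/

open MeasureTheory
open scoped InnerProductSpace ComplexOrder

noncomputable abbrev ell2 : Type := lp (fun _ : ℕ => ℂ) 2

/-- The canonical orthonormal basis vectors of `ℓ²(ℕ)`. -/
noncomputable def e (k : ℕ) : ell2 := lp.single 2 k 1

def ballot : ℕ → ℕ → ℕ
  | 0, 0 => 1
  | 0, _ + 1 => 0
  | n + 1, 0 => ballot n 1
  | n + 1, j + 1 => ballot n j + ballot n (j + 2)

lemma ballot_eq_zero_of_lt {n j : ℕ} (h : n < j) : ballot n j = 0 := by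
  induction n generalizing j with
  | zero => obtain ⟨j, rfl⟩ := Nat.exists_eq_succ_of_ne_zero h.ne'; rfl
  | succ n ih =>
    obtain ⟨j, rfl⟩ := Nat.exists_eq_succ_of_ne_zero (by omega : j ≠ 0)
    rw [ballot, ih (by omega), ih (by omega)]

lemma ballot_eq_choose_sub_choose (d j : ℕ) :
    (ballot (2 * d + j) j : ℤ) = (2 * d + j).choose d - (2 * d + j).choose (d + j + 1) := by
  induction h : 2 * d + j generalizing d j with
  | zero =>
    obtain ⟨rfl, rfl⟩ : d = 0 ∧ j = 0 := by omega
    simp [ballot]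
  | succ n ih =>
    rcases j with _ | j
    · obtain ⟨d, rfl⟩ := Nat.exists_eq_succ_of_ne_zero (by omega : d ≠ 0)
      rw [ballot, ih d 1 (by omega), Nat.choose_succ_succ', Nat.choose_succ_succ']
      push_cast
      ring
    · rcases d with _ | d
      · obtain rfl : n = j := by omega
        rw [ballot, Nat.cast_add, ih 0 n (by omega), ballot_eq_zero_of_lt (by omega)]
        simp
      · rw [ballot, Nat.cast_add, ih (d + 1) j (by omega), ih d (j + 2) (by omega),
          Nat.choose_succ_succ' n d, Nat.choose_succ_succ' n (d + 1 + (j + 1))]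
        push_cast
        ring_nf

lemma catalan_eq_choose_sub_choose (k : ℕ) :
    (catalan k : ℤ) = (2 * k).choose k - (2 * k).choose (k + 1) := by
  have hcentral : (k + 1) * catalan k = (2 * k).choose k := succ_mul_catalan_eq_centralBinom k
  have hnext : (2 * k).choose (k + 1) * (k + 1) = (2 * k).choose k * k := by
    rw [Nat.choose_succ_right_eq, show 2 * k - k = k by omega]
  have hk : ((k : ℤ) + 1) ≠ 0 := by positivity
  refine mul_left_cancel₀ hk ?_
  have hcentral' : ((k : ℤ) + 1) * catalan k = (2 * k).choose k := by exact_mod_cast hcentral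
  have hnext' : ((2 * k).choose (k + 1) : ℤ) * (k + 1) = (2 * k).choose k * k := by
    exact_mod_cast hnext
  linear_combination hcentral' + hnext'

lemma ballot_two_mul_zero (k : ℕ) : ballot (2 * k) 0 = catalan k := by
  have h := ballot_eq_choose_sub_choose k 0
  rw [add_zero, add_zero, ← catalan_eq_choose_sub_choose] at h
  exact_mod_cast h

lemma inner_e_left (i : ℕ) (x : ell2) : ⟪e i, x⟫_ℂ = x i := by
  simp [e, lp.inner_single_left]

lemma e_apply (j m : ℕ) : e j m = if m = j then 1 else 0 := by
  simp [e, lp.single_apply, Pi.single_apply]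

section UnilateralShift

open ContinuousLinearMap

variable {S : ell2 →L[ℂ] ell2}

lemma adjoint_shift_apply_coord (hS : ∀ k : ℕ, S (e k) = e (k + 1)) (x : ell2) (i : ℕ) :
    adjoint S x i = x (i + 1) := by
  rw [← inner_e_left, adjoint_inner_right, hS, inner_e_left]

lemma adjoint_shift_e_zero (hS : ∀ k : ℕ, S (e k) = e (k + 1)) : adjoint S (e 0) = 0 :=
  lp.ext <| funext fun m ↦ by simp [adjoint_shift_apply_coord hS, e_apply]

lemma adjoint_shift_e_succ (hS : ∀ k : ℕ, S (e k) = e (k + 1)) (j : ℕ) :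
    adjoint S (e (j + 1)) = e j :=
  lp.ext <| funext fun m ↦ by simp [adjoint_shift_apply_coord hS, e_apply]

lemma shift_apply_coord_zero (hS : ∀ k : ℕ, S (e k) = e (k + 1)) (x : ell2) : S x 0 = 0 := by
  rw [← inner_e_left, ← adjoint_inner_left, adjoint_shift_e_zero hS, inner_zero_left]

lemma shift_apply_coord_succ (hS : ∀ k : ℕ, S (e k) = e (k + 1)) (x : ell2) (i : ℕ) :
    S x (i + 1) = x i := by
  rw [← inner_e_left, ← adjoint_inner_left, adjoint_shift_e_succ hS, inner_e_left]

lemma pow_shift_add_adjoint_e_zero_apply (hS : ∀ k : ℕ, S (e k) = e (k + 1)) (n i : ℕ) :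
    ((S + adjoint S) ^ n) (e 0) i = ballot n i := by
  induction n generalizing i with
  | zero => cases i <;> simp [e_apply, ballot]
  | succ n ih =>
    rw [pow_succ', mul_apply_eq_comp, _root_.add_apply, lp.coeFn_add, Pi.add_apply,
      adjoint_shift_apply_coord hS]
    cases i with
    | zero => rw [shift_apply_coord_zero hS, ih, ballot, zero_add]
    | succ i => rw [shift_apply_coord_succ hS, ih, ih, ballot, Nat.cast_add]

end UnilateralShift

/-- The even moments of the real part of the standard unilateral shift are the Catalan
numbers. -/
theorem shift_moments_catalan (S : ell2 →L[ℂ] ell2)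
    (hS : ∀ k : ℕ, S (e k) = e (k + 1)) (k : ℕ) :
    ⟪e 0, ((S + ContinuousLinearMap.adjoint S) ^ (2 * k)) (e 0)⟫_ℂ = (catalan k : ℂ) := by
  rw [inner_e_left, pow_shift_add_adjoint_e_zero_apply hS, ballot_two_mul_zero]
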